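/- arXiv:1103.2717 — 2 statements merged into one kernel-verified Lean document; each statement's English description precedes it below -/
import Mathlib

section
/- The lazy coin flip measure is an averaged Chio measure: Let n ≥ 2, let ∅ ⊆ I ⊆ {1,…,n−1}², and let B : I → {−1,0,+1}. Then (1/2)^{|I| + |Supp(B)|} = (1/2)^{|Supp(B)|} · Σ_{B̃} P_chio[{B̃}], where the sum ranges over all B̃ : I → {−1,0,+1} with Supp(B̃) = Supp(B), and P_chio[{B̃}] := 2^{−|Ĭ|}·|{A : Ĭ → {−1,+1} : A condenses to B̃}|. Equivalently, Σ_{B̃ : Supp(B̃) = Supp(B)} P_chio[{B̃}] = (1/2)^{|I|}. -/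
/-!
For a sign matrix `A` on `Ĭ`, each entry `A(i,j)A(s,t) − A(i,t)A(s,j)` lies in `{−2, 0, 2}`, so
`A` condenses to exactly one `B̃`. Summing the Chio counts over the `B̃` with the support of `B`
therefore counts the sign matrices `A` whose condensed entry at `p ∈ I` vanishes exactly when
`B p` does. As the entry vanishes iff `A(i,j) = A(s,t)A(i,t)A(s,j)`, this prescribes `A` on `I`
in terms of its entries on `Ĭ \ I`, which are free: there are `2^{|Ĭ| − |I|}` such `A`.
-/

/-- The grid of index positions `{1,…,s-1} × {1,…,t-1}`. -/
def mgrid (s t : ℕ) : Finset (ℕ × ℕ) := Finset.Icc 1 (s - 1) ×ˢ Finset.Icc 1 (t - 1)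

/-- The Chio extension `J̆` of a set `J` of positions:
`J̆ = {(s,t)} ∪ {(i,t) : i ∈ p1(J)} ∪ {(s,j) : j ∈ p2(J)} ∪ J`. -/
def chioExt (s t : ℕ) (J : Finset (ℕ × ℕ)) : Finset (ℕ × ℕ) :=
  insert (s, t) (((J.image Prod.fst).image fun i => (i, t)) ∪
    ((J.image Prod.snd).image fun j => (s, j)) ∪ J)

/-- `A` condenses to `B` on `I`:
`A(i,j)·A(s,t) − A(i,t)·A(s,j) = 2·B(i,j)` for every `(i,j) ∈ I`. -/
def CondensesTo (s t : ℕ) (I : Finset (ℕ × ℕ)) (A B : ℕ × ℕ → ℤ) : Prop :=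
  ∀ p ∈ I, A p * A (s, t) - A (p.1, t) * A (s, p.2) = 2 * B p

/-- `A` encodes a function `E → {−1,+1}`: it takes values `±1` on `E` and is
normalized to `1` off `E`. -/
def IsSignOn (E : Finset (ℕ × ℕ)) (A : ℕ × ℕ → ℤ) : Prop :=
  (∀ p ∈ E, A p = 1 ∨ A p = -1) ∧ ∀ p ∉ E, A p = 1

/-- First projection `p1(I)` of a set of positions. -/
def proj1 (I : Finset (ℕ × ℕ)) : Finset ℕ := I.image Prod.fst

/-- Second projection `p2(I)` of a set of positions. -/
def proj2 (I : Finset (ℕ × ℕ)) : Finset ℕ := I.image Prod.snd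

/-- The vertex set of the bipartite graph `X_B`: a copy `Sum.inl i` of each row index
`i ∈ p1(I)` and a copy `Sum.inr j` of each column index `j ∈ p2(I)`. -/
def vertSet (I : Finset (ℕ × ℕ)) : Finset (ℕ ⊕ ℕ) :=
  (proj1 I).image Sum.inl ∪ (proj2 I).image Sum.inr

/-- `f0(X_B) = |p1(I)| + |p2(I)|`, the number of vertices of `X_B`. -/
def fZero (I : Finset (ℕ × ℕ)) : ℕ := (proj1 I).card + (proj2 I).card

/-- The Chio measure of the singleton event `{B̃}` (all entries of `I` specified):
`P_chio[{B̃}] = 2^{−|Ĭ|} · |{A : Ĭ → {±1} : A condenses to B̃}|`. -/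
noncomputable def PchioSingle (n : ℕ) (I : Finset (ℕ × ℕ)) (Bt : ℕ × ℕ → ℤ) : ℚ :=
  (Set.ncard {A : ℕ × ℕ → ℤ | IsSignOn (chioExt n n I) A ∧ CondensesTo n n I A Bt} : ℚ) /
    2 ^ (chioExt n n I).card

theorem setOf_isSignOn_eq_image_powerset (E : Finset (ℕ × ℕ)) :
    {A | IsSignOn E A} =
      (fun S : Finset (ℕ × ℕ) => fun p => if p ∈ S then (-1 : ℤ) else 1) '' ↑E.powerset := by
  ext A
  constructor
  · rintro ⟨hE, hnotE⟩
    refine ⟨E.filter (A · = -1), Finset.mem_powerset.2 (Finset.filter_subset _ _),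
      funext fun p => ?_⟩
    by_cases hp : p ∈ E
    · rcases hE p hp with h | h <;> simp [hp, h]
    · simp [hp, hnotE p hp]
  · rintro ⟨S, hS, rfl⟩
    refine ⟨fun p _ => by dsimp only; split_ifs <;> simp, fun p hp => if_neg fun h => hp ?_⟩
    exact Finset.mem_powerset.1 hS h

theorem finite_setOf_isSignOn (E : Finset (ℕ × ℕ)) : {A | IsSignOn E A}.Finite := by
  rw [setOf_isSignOn_eq_image_powerset]
  exact E.powerset.finite_toSet.image _

theorem ncard_setOf_isSignOn (E : Finset (ℕ × ℕ)) : {A | IsSignOn E A}.ncard = 2 ^ E.card := by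
  rw [setOf_isSignOn_eq_image_powerset, Set.ncard_image_of_injective, Set.ncard_coe_finset,
    Finset.card_powerset]
  intro S S' h
  ext p
  have := congrFun h p
  dsimp only at this
  split_ifs at this <;> simp_all

theorem ncard_setOf_isSignOn_forced {E I : Finset (ℕ × ℕ)} (hIE : I ⊆ E)
    (σ : (ℕ × ℕ → ℤ) → ℕ × ℕ → ℤ)
    (hσ_local : ∀ A A', (∀ q ∉ I, A q = A' q) → ∀ p ∈ I, σ A p = σ A' p)
    (hσ_sign : ∀ A, IsSignOn (E \ I) A → ∀ p ∈ I, σ A p = 1 ∨ σ A p = -1) :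
    {A | IsSignOn E A ∧ ∀ p ∈ I, A p = σ A p}.ncard = 2 ^ (E \ I).card := by
  rw [← ncard_setOf_isSignOn]
  -- Resetting `A` to `1` on `I` is a bijection onto the sign functions on `E \ I`;
  -- its inverse fills `I` in with `σ`.
  let forget : (ℕ × ℕ → ℤ) → ℕ × ℕ → ℤ := fun A q => if q ∈ I then 1 else A q
  let fill : (ℕ × ℕ → ℤ) → ℕ × ℕ → ℤ := fun g q => if q ∈ I then σ g q else g q
  have forget_eq {A q} (hq : q ∉ I) : forget A q = A q := if_neg hq
  have fill_eq {g q} (hq : q ∉ I) : fill g q = g q := if_neg hq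
  refine Set.ncard_congr (fun A _ => forget A) ?_ ?_ ?_
  · rintro A ⟨⟨hE, hnotE⟩, -⟩
    refine ⟨fun q hq => ?_, fun q hq => ?_⟩
    · rw [Finset.mem_sdiff] at hq
      rw [forget_eq hq.2]; exact hE q hq.1
    · by_cases hqI : q ∈ I
      · exact if_pos hqI
      · rw [forget_eq hqI]; exact hnotE q fun h => hq (Finset.mem_sdiff.2 ⟨h, hqI⟩)
  · rintro A A' ⟨-, hA⟩ ⟨-, hA'⟩ h
    have hoff : ∀ q ∉ I, A q = A' q := fun q hq => by
      simpa [forget_eq hq] using congrFun h q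
    funext q
    by_cases hq : q ∈ I
    · rw [hA q hq, hA' q hq, hσ_local A A' hoff q hq]
    · exact hoff q hq
  · intro g hg
    refine ⟨fill g, ⟨⟨fun q hq => ?_, fun q hq => ?_⟩, fun p hp => ?_⟩, funext fun q => ?_⟩
    · by_cases hqI : q ∈ I
      · simpa [fill, hqI] using hσ_sign g hg q hqI
      · rw [fill_eq hqI]; exact hg.1 q (Finset.mem_sdiff.2 ⟨hq, hqI⟩)
    · have hqI : q ∉ I := fun h => hq (hIE h)
      rw [fill_eq hqI]; exact hg.2 q fun h => hq (Finset.mem_sdiff.1 h).1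
    · rw [hσ_local _ _ (fun q hq => fill_eq hq) p hp]; exact if_pos hp
    · by_cases hq : q ∈ I
      · simp only [forget, if_pos hq]; exact (hg.2 q fun h => (Finset.mem_sdiff.1 h).2 hq).symm
      · rw [forget_eq hq, fill_eq hq]

theorem finsum_mem_ncard_inter_preimage_singleton {α β : Type*} {s : Set α} {t : Set β}
    (hs : s.Finite) (ht : t.Finite) (f : α → β) :
    ∑ᶠ b ∈ t, (s ∩ f ⁻¹' {b}).ncard = (s ∩ f ⁻¹' t).ncard := by
  rw [← Set.biUnion_preimage_singleton, Set.inter_iUnion₂,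
    ht.ncard_biUnion (fun _ _ => hs.inter_of_left _)]
  exact (Set.pairwiseDisjoint_fiber f t).mono fun _ => Set.inter_subset_right

section ChioExt

variable {s t : ℕ} {J : Finset (ℕ × ℕ)}

theorem subset_chioExt : J ⊆ chioExt s t J := fun _ hp =>
  Finset.mem_insert_of_mem (Finset.mem_union_right _ hp)

theorem corner_mem_chioExt : (s, t) ∈ chioExt s t J := Finset.mem_insert_self _ _

theorem fst_mk_mem_chioExt {p : ℕ × ℕ} (hp : p ∈ J) : (p.1, t) ∈ chioExt s t J :=
  Finset.mem_insert_of_mem <| Finset.mem_union_left _ <| Finset.mem_union_left _ <|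
    Finset.mem_image_of_mem _ (Finset.mem_image_of_mem _ hp)

theorem mk_snd_mem_chioExt {p : ℕ × ℕ} (hp : p ∈ J) : (s, p.2) ∈ chioExt s t J :=
  Finset.mem_insert_of_mem <| Finset.mem_union_left _ <| Finset.mem_union_right _ <|
    Finset.mem_image_of_mem _ (Finset.mem_image_of_mem _ hp)

theorem mk_right_notMem_of_subset_mgrid (hJ : J ⊆ mgrid s t) (x : ℕ) : (x, t) ∉ J := by
  intro h
  have := hJ h
  simp only [mgrid, Finset.mem_product, Finset.mem_Icc] at this
  omega

theorem mk_left_notMem_of_subset_mgrid (hJ : J ⊆ mgrid s t) (y : ℕ) : (s, y) ∉ J := by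
  intro h
  have := hJ h
  simp only [mgrid, Finset.mem_product, Finset.mem_Icc] at this
  omega

end ChioExt

section SignArithmetic

variable {a x y z : ℤ}

theorem two_mul_ediv_two_of_signs (ha : a = 1 ∨ a = -1) (hx : x = 1 ∨ x = -1)
    (hy : y = 1 ∨ y = -1) (hz : z = 1 ∨ z = -1) :
    2 * ((a * x - y * z) / 2) = a * x - y * z := by
  rcases ha with rfl | rfl <;> rcases hx with rfl | rfl <;>
    rcases hy with rfl | rfl <;> rcases hz with rfl | rfl <;> decide

theorem ediv_two_mem_of_signs (ha : a = 1 ∨ a = -1) (hx : x = 1 ∨ x = -1)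
    (hy : y = 1 ∨ y = -1) (hz : z = 1 ∨ z = -1) :
    (a * x - y * z) / 2 = -1 ∨ (a * x - y * z) / 2 = 0 ∨ (a * x - y * z) / 2 = 1 := by
  rcases ha with rfl | rfl <;> rcases hx with rfl | rfl <;>
    rcases hy with rfl | rfl <;> rcases hz with rfl | rfl <;> decide

theorem ediv_two_eq_zero_iff_of_signs (ha : a = 1 ∨ a = -1) (hx : x = 1 ∨ x = -1)
    (hy : y = 1 ∨ y = -1) (hz : z = 1 ∨ z = -1) (P : Prop) [Decidable P] :
    ((a * x - y * z) / 2 = 0 ↔ P) ↔ a = (if P then 1 else -1) * (x * y * z) := by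
  by_cases hP : P <;>
    rcases ha with rfl | rfl <;> rcases hx with rfl | rfl <;>
    rcases hy with rfl | rfl <;> rcases hz with rfl | rfl <;> simp [hP]

end SignArithmetic

/-- The matrix to which a sign matrix `A` condenses (the division by `2` is then exact),
normalized to `0` off `I`. -/
def chioCondense (s t : ℕ) (I : Finset (ℕ × ℕ)) (A : ℕ × ℕ → ℤ) : ℕ × ℕ → ℤ :=
  fun p => if p ∈ I then (A p * A (s, t) - A (p.1, t) * A (s, p.2)) / 2 else 0

/-- The value `A p` must take for the condensed entry at `p` to vanish exactly when `B p` does. -/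
def forcedSign (s t : ℕ) (B A : ℕ × ℕ → ℤ) (p : ℕ × ℕ) : ℤ :=
  (if B p = 0 then 1 else -1) * (A (s, t) * A (p.1, t) * A (s, p.2))

def sameSupportTernary (I : Finset (ℕ × ℕ)) (B : ℕ × ℕ → ℤ) : Set (ℕ × ℕ → ℤ) :=
  {Bt | (∀ p ∈ I, Bt p = -1 ∨ Bt p = 0 ∨ Bt p = 1) ∧ (∀ p ∉ I, Bt p = 0) ∧
    ∀ p ∈ I, (Bt p = 0 ↔ B p = 0)}

theorem finite_sameSupportTernary (I : Finset (ℕ × ℕ)) (B : ℕ × ℕ → ℤ) :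
    (sameSupportTernary I B).Finite := by
  let restrict : (ℕ × ℕ → ℤ) → I → ℤ := fun Bt p => Bt p
  refine Set.Finite.of_finite_image (f := restrict) ?_ fun Bt hBt Bt' hBt' h => funext fun q => ?_
  · refine (Set.Finite.pi' fun _ => Set.toFinite ({-1, 0, 1} : Set ℤ)).subset ?_
    rintro _ ⟨Bt, hBt, rfl⟩ p
    simpa using hBt.1 p p.2
  · by_cases hq : q ∈ I
    · exact congrFun h ⟨q, hq⟩
    · rw [hBt.2.1 q hq, hBt'.2.1 q hq]

section Condense

variable {s t : ℕ} {I : Finset (ℕ × ℕ)} {A : ℕ × ℕ → ℤ}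

theorem IsSignOn.chioExt_signs (hA : IsSignOn (chioExt s t I) A) {p : ℕ × ℕ} (hp : p ∈ I) :
    (A p = 1 ∨ A p = -1) ∧ (A (s, t) = 1 ∨ A (s, t) = -1) ∧
      (A (p.1, t) = 1 ∨ A (p.1, t) = -1) ∧ (A (s, p.2) = 1 ∨ A (s, p.2) = -1) :=
  ⟨hA.1 p (subset_chioExt hp), hA.1 _ corner_mem_chioExt, hA.1 _ (fst_mk_mem_chioExt hp),
    hA.1 _ (mk_snd_mem_chioExt hp)⟩

theorem condensesTo_iff_chioCondense_eq (hA : IsSignOn (chioExt s t I) A) {Bt : ℕ × ℕ → ℤ}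
    (hBt : ∀ p ∉ I, Bt p = 0) : CondensesTo s t I A Bt ↔ chioCondense s t I A = Bt := by
  constructor
  · intro hcond
    funext p
    by_cases hp : p ∈ I
    · simp only [chioCondense, if_pos hp, hcond p hp]
      omega
    · simp only [chioCondense, if_neg hp, hBt p hp]
  · rintro rfl p hp
    obtain ⟨h₁, h₂, h₃, h₄⟩ := hA.chioExt_signs hp
    simp only [chioCondense, if_pos hp, two_mul_ediv_two_of_signs h₁ h₂ h₃ h₄]

theorem chioCondense_mem_sameSupportTernary_iff (hA : IsSignOn (chioExt s t I) A)
    (B : ℕ × ℕ → ℤ) :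
    chioCondense s t I A ∈ sameSupportTernary I B ↔ ∀ p ∈ I, A p = forcedSign s t B A p := by
  have hzero : ∀ p ∈ I, (chioCondense s t I A p = 0 ↔ B p = 0) ↔ A p = forcedSign s t B A p :=
    fun p hp => by
      obtain ⟨h₁, h₂, h₃, h₄⟩ := hA.chioExt_signs hp
      simp only [chioCondense, if_pos hp, forcedSign]
      exact ediv_two_eq_zero_iff_of_signs h₁ h₂ h₃ h₄ _
  refine ⟨fun h p hp => (hzero p hp).1 (h.2.2 p hp), fun h => ⟨fun p hp => ?_, fun p hp => ?_,
    fun p hp => (hzero p hp).2 (h p hp)⟩⟩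
  · obtain ⟨h₁, h₂, h₃, h₄⟩ := hA.chioExt_signs hp
    simp only [chioCondense, if_pos hp]
    exact ediv_two_mem_of_signs h₁ h₂ h₃ h₄
  · exact if_neg hp

theorem setOf_condensesTo_eq_inter_preimage {Bt : ℕ × ℕ → ℤ} (hBt : ∀ p ∉ I, Bt p = 0) :
    {A | IsSignOn (chioExt s t I) A ∧ CondensesTo s t I A Bt} =
      {A | IsSignOn (chioExt s t I) A} ∩ chioCondense s t I ⁻¹' {Bt} :=
  Set.ext fun _ => and_congr_right fun hA => condensesTo_iff_chioCondense_eq hA hBt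

theorem setOf_isSignOn_inter_preimage_sameSupportTernary (B : ℕ × ℕ → ℤ) :
    {A | IsSignOn (chioExt s t I) A} ∩ chioCondense s t I ⁻¹' sameSupportTernary I B =
      {A | IsSignOn (chioExt s t I) A ∧ ∀ p ∈ I, A p = forcedSign s t B A p} :=
  Set.ext fun _ => and_congr_right fun hA => chioCondense_mem_sameSupportTernary_iff hA B

end Condense

theorem ncard_setOf_forcedSign {s t : ℕ} {I : Finset (ℕ × ℕ)} (hI : I ⊆ mgrid s t)
    (B : ℕ × ℕ → ℤ) :
    {A | IsSignOn (chioExt s t I) A ∧ ∀ p ∈ I, A p = forcedSign s t B A p}.ncard =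
      2 ^ (chioExt s t I \ I).card := by
  refine ncard_setOf_isSignOn_forced subset_chioExt _ (fun A A' h p _ => ?_) fun A hA p hp => ?_
  · simp only [forcedSign, h _ (mk_right_notMem_of_subset_mgrid hI _),
      h _ (mk_left_notMem_of_subset_mgrid hI _)]
  · have sign_at {q} (hq : q ∈ chioExt s t I) (hqI : q ∉ I) : A q = 1 ∨ A q = -1 :=
      hA.1 q (Finset.mem_sdiff.2 ⟨hq, hqI⟩)
    rcases sign_at corner_mem_chioExt (mk_right_notMem_of_subset_mgrid hI _) with h₁ | h₁ <;>
    rcases sign_at (fst_mk_mem_chioExt hp) (mk_right_notMem_of_subset_mgrid hI _) with h₂ | h₂ <;>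
    rcases sign_at (mk_snd_mem_chioExt hp) (mk_left_notMem_of_subset_mgrid hI _) with h₃ | h₃ <;>
    by_cases hB : B p = 0 <;> simp [forcedSign, h₁, h₂, h₃, hB]

theorem lcf_is_averaged_chio_general (n : ℕ)
    (I : Finset (ℕ × ℕ)) (hI : I ⊆ mgrid n n)
    (B : ℕ × ℕ → ℤ) :
    (∑ᶠ Bt ∈ {Bt : ℕ × ℕ → ℤ | (∀ p ∈ I, Bt p = -1 ∨ Bt p = 0 ∨ Bt p = 1) ∧
        (∀ p ∉ I, Bt p = 0) ∧ ∀ p ∈ I, (Bt p = 0 ↔ B p = 0)},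
      PchioSingle n I Bt) = (1 / 2 : ℚ) ^ I.card := by
  have hS := finite_sameSupportTernary I B
  calc ∑ᶠ Bt ∈ sameSupportTernary I B, PchioSingle n I Bt
      = ∑ᶠ Bt ∈ sameSupportTernary I B,
          (({A | IsSignOn (chioExt n n I) A} ∩ chioCondense n n I ⁻¹' {Bt}).ncard : ℚ) *
            (2 ^ (chioExt n n I).card)⁻¹ :=
        finsum_mem_congr rfl fun Bt hBt => by
          rw [PchioSingle, div_eq_mul_inv, setOf_condensesTo_eq_inter_preimage hBt.2.1]
    _ = (({A | IsSignOn (chioExt n n I) A} ∩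
            chioCondense n n I ⁻¹' sameSupportTernary I B).ncard : ℚ) *
          (2 ^ (chioExt n n I).card)⁻¹ := by
        rw [← finsum_mem_mul, ← Nat.cast_finsum_mem hS,
          finsum_mem_ncard_inter_preimage_singleton (finite_setOf_isSignOn _) hS]
    _ = (1 / 2) ^ I.card := by
        rw [setOf_isSignOn_inter_preimage_sameSupportTernary, ncard_setOf_forcedSign hI,
          Nat.cast_pow, Nat.cast_ofNat, Finset.card_sdiff_of_subset subset_chioExt,
          pow_sub₀ _ two_ne_zero (Finset.card_le_card subset_chioExt), one_div_pow]
        field_simp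

/-- **The lazy coin flip measure is an averaged Chio measure.** For `n ≥ 2`,
`I ⊆ {1,…,n-1}²` and `B : I → {−1,0,+1}`, summing `P_chio[{B̃}]` over all
`B̃ : I → {−1,0,+1}` with `Supp(B̃) = Supp(B)` (normalized to `0` off `I`)
gives `(1/2)^{|I|}`; equivalently
`P_lcf[{B}] = (1/2)^{|I|+|Supp(B)|} = (1/2)^{|Supp(B)|} · Σ_{B̃} P_chio[{B̃}]`. -/
theorem lcf_is_averaged_chio (n : ℕ) (hn : 2 ≤ n)
    (I : Finset (ℕ × ℕ)) (hI : I ⊆ mgrid n n)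
    (B : ℕ × ℕ → ℤ) (hB : ∀ p ∈ I, B p = -1 ∨ B p = 0 ∨ B p = 1) :
    (∑ᶠ Bt ∈ {Bt : ℕ × ℕ → ℤ | (∀ p ∈ I, Bt p = -1 ∨ Bt p = 0 ∨ Bt p = 1) ∧
        (∀ p ∉ I, Bt p = 0) ∧ ∀ p ∈ I, (Bt p = 0 ↔ B p = 0)},
      PchioSingle n I Bt) = (1 / 2 : ℚ) ^ I.card :=
  lcf_is_averaged_chio_general n I hI B
end

section
/- All balanced signings of a {0,1}-matrix have the same rank: Let m,n ≥ 1, let B : {1,…,m}×{1,…,n} → {0,1}, and let B̃ : {1,…,m}×{1,…,n} → {−1,0,+1} be a balanced signing of B, i.e. |B̃(i,j)| = B(i,j) for all (i,j) and the signed bipartite graph (X_{B̃}, σ_{B̃}) is balanced. Then rank_ℚ(B̃) = rank_ℚ(B), where the matrices are viewed over the rationals. -/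
/-!
A balanced signing is a switching of the all-positive one. Every cycle has sign `+1`, hence so
does every closed walk: `bypass` turns a closed walk into the trivial path by cutting off closed
walks that are cycles or edges traversed twice. Signs of walks therefore depend only on their
endpoints, and the sign `s v` of a walk from a fixed root of the component of `v` satisfies
`σ(u v) = s u * s v` on every edge. So `B̃ = D₁ |B̃| D₂` with `±1` diagonal matrices `Dᵢ`, which
do not change the rank.
-/

/-- The bipartite graph `X_{B̃}` associated with a matrix `B̃`: vertex classes are the rows
(`Sum.inl i`) and the columns (`Sum.inr j`), with an edge `{rᵢ, cⱼ}` iff `B̃ i j ≠ 0`. -/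
def matGraph {m n : ℕ} (Bt : Matrix (Fin m) (Fin n) ℤ) : SimpleGraph (Fin m ⊕ Fin n) where
  Adj u v := (∃ i j, Bt i j ≠ 0 ∧ u = Sum.inl i ∧ v = Sum.inr j) ∨
             (∃ i j, Bt i j ≠ 0 ∧ v = Sum.inl i ∧ u = Sum.inr j)
  symm := ⟨fun u v h => Or.symm h⟩
  loopless := by
    constructor
    rintro u (⟨i, j, -, h1, h2⟩ | ⟨i, j, -, h1, h2⟩) <;> subst h1 <;> simp at h2

/-- The sign `σ_{B̃}` of an edge of `X_{B̃}`, read off from `B̃`. -/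
def matSign {m n : ℕ} (Bt : Matrix (Fin m) (Fin n) ℤ) :
    Fin m ⊕ Fin n → Fin m ⊕ Fin n → ℤ
  | Sum.inl i, Sum.inr j => Bt i j
  | Sum.inr j, Sum.inl i => Bt i j
  | Sum.inl _, Sum.inl _ => 0
  | Sum.inr _, Sum.inr _ => 0

/-- The signed graph `(X_{B̃}, σ_{B̃})` is balanced: every cycle contains an even number of
edges of sign `−1`. -/
def MatBalanced {m n : ℕ} (Bt : Matrix (Fin m) (Fin n) ℤ) : Prop :=
  ∀ (v : Fin m ⊕ Fin n) (w : (matGraph Bt).Walk v v), w.IsCycle →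
    Even ((w.darts.filter fun d => decide (matSign Bt d.toProd.1 d.toProd.2 = -1)).length)

open SimpleGraph

namespace SimpleGraph.Walk

variable {V M : Type*} [CommMonoid M] {G : SimpleGraph V} (σ : V → V → M)

/-- The gain of a walk in the gain graph `(G, σ)`; for `σ = matSign Bt` it is the sign of the
walk. -/
def gain {u v : V} (p : G.Walk u v) : M :=
  (p.darts.map fun d => σ d.fst d.snd).prod

@[simp]
lemma gain_nil {u : V} : (nil : G.Walk u u).gain σ = 1 := rfl

@[simp]
lemma gain_cons {u v w : V} (h : G.Adj u v) (p : G.Walk v w) :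
    (cons h p).gain σ = σ u v * p.gain σ := by
  simp [gain]

@[simp]
lemma gain_append {u v w : V} (p : G.Walk u v) (q : G.Walk v w) :
    (p.append q).gain σ = p.gain σ * q.gain σ := by
  simp [gain]

variable {σ}

lemma gain_mul_gain_reverse (hσ : ∀ a b, G.Adj a b → σ a b * σ b a = 1) {u v : V}
    (p : G.Walk u v) : p.gain σ * p.reverse.gain σ = 1 := by
  induction p with
  | nil => simp
  | @cons a b _ h p ih =>
    rw [reverse_cons, gain_append, gain_cons, gain_cons, gain_nil, mul_one]
    calc σ a b * p.gain σ * (p.reverse.gain σ * σ b a)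
        = (p.gain σ * p.reverse.gain σ) * (σ a b * σ b a) := by ac_rfl
      _ = 1 := by rw [ih, hσ a b h, one_mul]

section Balanced

variable [DecidableEq V] (hσ : ∀ a b, G.Adj a b → σ a b * σ b a = 1)
  (hcyc : ∀ (v : V) (c : G.Walk v v), c.IsCycle → c.gain σ = 1)
include hσ hcyc

lemma gain_cons_eq_one_of_isPath {u v : V} (h : G.Adj u v) {q : G.Walk v u} (hq : q.IsPath) :
    (cons h q).gain σ = 1 := by
  by_cases he : s(u, v) ∈ q.edges
  · rw [hq.eq_adj_toWalk_of_mem_edges (Sym2.eq_swap ▸ he)]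
    simpa using hσ u v h
  · exact hcyc u _ ((cons_isCycle_iff q h).mpr ⟨hq, he⟩)

/-- Each step of `bypass` cuts off a closed walk that closes a path by one edge: a cycle, or
that edge traversed back and forth. -/
lemma gain_bypass {u v : V} (p : G.Walk u v) : p.bypass.gain σ = p.gain σ := by
  induction p with
  | nil => rfl
  | @cons a b _ h p ih =>
    simp only [bypass]
    split_ifs with ha
    · have hloop := gain_cons_eq_one_of_isPath hσ hcyc h (p.bypass_isPath.takeUntil ha)
      rw [gain_cons, ← ih]
      conv_rhs =>
        rw [← p.bypass.take_spec ha, gain_append, ← mul_assoc, ← gain_cons σ h, hloop, one_mul]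
    · rw [gain_cons, gain_cons, ih]

lemma gain_eq_one_of_closed {v : V} (c : G.Walk v v) : c.gain σ = 1 := by
  rw [← gain_bypass hσ hcyc, eq_nil_iff_nil.mpr (isPath_iff_nil.mp c.bypass_isPath), gain_nil]

lemma gain_eq_gain {u v : V} (p q : G.Walk u v) : p.gain σ = q.gain σ := by
  have hpq : p.gain σ * q.reverse.gain σ = 1 := by
    rw [← gain_append, gain_eq_one_of_closed hσ hcyc]
  calc p.gain σ = p.gain σ * (q.reverse.gain σ * q.gain σ) := by
        rw [mul_comm (q.reverse.gain σ), gain_mul_gain_reverse hσ, mul_one]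
    _ = q.gain σ := by rw [← mul_assoc, hpq, one_mul]

end Balanced

end SimpleGraph.Walk

namespace SimpleGraph

variable {V M : Type*} [CommMonoid M] {G : SimpleGraph V} {σ : V → V → M}

open Walk in
theorem exists_potential_of_gain_cycle_eq_one [DecidableEq V]
    (hσ : ∀ a b, G.Adj a b → σ a b * σ b a = 1)
    (hcyc : ∀ (v : V) (c : G.Walk v v), c.IsCycle → c.gain σ = 1) :
    ∃ s : V → M, (∀ v, IsUnit (s v)) ∧ ∀ a b, G.Adj a b → s a * σ a b = s b := by
  let root : V → V := fun v => (G.connectedComponentMk v).out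
  have hreach (v : V) : G.Reachable (root v) v := ConnectedComponent.exact (Quot.out_eq _)
  let walk (v : V) : G.Walk (root v) v := (hreach v).some
  refine ⟨fun v => (walk v).gain σ,
    fun v => .of_mul_eq_one _ (gain_mul_gain_reverse hσ _), fun a b h => ?_⟩
  have hroot : root a = root b :=
    congrArg Quot.out (ConnectedComponent.connectedComponentMk_eq_of_adj h)
  obtain ⟨q, hq⟩ : ∃ q : G.Walk (root a) b, q.gain σ = (walk b).gain σ := by
    rw [hroot]
    exact ⟨_, rfl⟩
  show (walk a).gain σ * σ a b = (walk b).gain σ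
  rw [← hq, ← gain_eq_gain hσ hcyc ((walk a).concat h) q]
  simp [concat]

end SimpleGraph

lemma List.prod_eq_neg_one_pow_countP {R : Type*} [Monoid R] [HasDistribNeg R] [DecidableEq R]
    (l : List R) (h : ∀ x ∈ l, x = 1 ∨ x = -1) :
    l.prod = (-1) ^ l.countP (· = -1) := by
  induction l with
  | nil => simp
  | cons a t ih =>
    rw [List.prod_cons, ih fun x hx => h x (List.mem_cons_of_mem _ hx), List.countP_cons]
    rcases h a List.mem_cons_self with rfl | rfl
    · split_ifs with h1
      · rw [pow_succ', ← of_decide_eq_true h1]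
      · rw [one_mul, add_zero]
    · simp [pow_succ']

lemma Matrix.isUnit_det_diagonal {ι R : Type*} [Fintype ι] [DecidableEq ι] [CommRing R]
    {d : ι → R} (hd : ∀ i, IsUnit (d i)) : IsUnit (diagonal d).det :=
  (isUnit_iff_isUnit_det _).mp (isUnit_diagonal.mpr (Pi.isUnit_iff.mpr hd))

lemma Matrix.rank_diagonal_mul_mul_diagonal {m n R : Type*} [Fintype m] [Fintype n]
    [DecidableEq m] [DecidableEq n] [CommRing R] {d₁ : m → R} {d₂ : n → R}
    (h₁ : ∀ i, IsUnit (d₁ i)) (h₂ : ∀ j, IsUnit (d₂ j)) (A : Matrix m n R) :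
    (diagonal d₁ * A * diagonal d₂).rank = A.rank := by
  rw [rank_mul_eq_left_of_isUnit_det _ _ (isUnit_det_diagonal h₂),
    rank_mul_eq_right_of_isUnit_det _ _ (isUnit_det_diagonal h₁)]

section Signing

variable {m n : ℕ} {Bt : Matrix (Fin m) (Fin n) ℤ}

lemma matSign_comm (a b : Fin m ⊕ Fin n) : matSign Bt a b = matSign Bt b a := by
  cases a <;> cases b <;> rfl

lemma isUnit_matSign (hunit : ∀ i j, Bt i j ≠ 0 → IsUnit (Bt i j)) {a b : Fin m ⊕ Fin n}
    (h : (matGraph Bt).Adj a b) : IsUnit (matSign Bt a b) := by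
  rcases h with ⟨i, j, hij, rfl, rfl⟩ | ⟨i, j, hij, rfl, rfl⟩ <;> exact hunit i j hij

variable (hunit : ∀ i j, Bt i j ≠ 0 → IsUnit (Bt i j))
include hunit

lemma MatBalanced.gain_eq_one_of_isCycle (hbal : MatBalanced Bt) {v : Fin m ⊕ Fin n}
    {c : (matGraph Bt).Walk v v} (hc : c.IsCycle) : c.gain (matSign Bt) = 1 := by
  have hsigns : ∀ x ∈ c.darts.map fun d => matSign Bt d.fst d.snd, x = 1 ∨ x = -1 := by
    simp only [List.mem_map]
    rintro _ ⟨d, -, rfl⟩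
    exact Int.isUnit_iff.mp (isUnit_matSign hunit d.adj)
  rw [Walk.gain, List.prod_eq_neg_one_pow_countP _ hsigns, List.countP_map,
    List.countP_eq_length_filter]
  exact (hbal v c hc).neg_one_pow

theorem MatBalanced.exists_eq_diagonal_mul_abs_mul_diagonal (hbal : MatBalanced Bt) :
    ∃ (d₁ : Fin m → ℤ) (d₂ : Fin n → ℤ), (∀ i, IsUnit (d₁ i)) ∧ (∀ j, IsUnit (d₂ j)) ∧
      Bt = Matrix.diagonal d₁ * Bt.map abs * Matrix.diagonal d₂ := by
  have hσ (a b) (h : (matGraph Bt).Adj a b) : matSign Bt a b * matSign Bt b a = 1 := by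
    rw [matSign_comm b a]
    exact Int.isUnit_mul_self (isUnit_matSign hunit h)
  obtain ⟨s, hs, hsσ⟩ := exists_potential_of_gain_cycle_eq_one hσ
    fun v c hc => hbal.gain_eq_one_of_isCycle hunit hc
  refine ⟨s ∘ Sum.inl, s ∘ Sum.inr, fun i => hs _, fun j => hs _, ?_⟩
  ext i j
  rw [Matrix.mul_diagonal, Matrix.diagonal_mul, Matrix.map_apply]
  by_cases hij : Bt i j = 0
  · simp [hij]
  · have hsign : s (.inl i) * Bt i j = s (.inr j) := hsσ _ _ (Or.inl ⟨i, j, hij, rfl, rfl⟩)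
    have habs : |Bt i j| = 1 := Int.isUnit_iff_abs_eq.mp (hunit i j hij)
    rw [Function.comp_apply, Function.comp_apply, habs, mul_one, ← hsign, ← mul_assoc,
      Int.isUnit_mul_self (hs _), one_mul]

end Signing

theorem balanced_signing_rank_general (m n : ℕ)
    (B : Matrix (Fin m) (Fin n) ℤ) (hB : ∀ i j, B i j = 0 ∨ B i j = 1)
    (Bt : Matrix (Fin m) (Fin n) ℤ) (habs : ∀ i j, |Bt i j| = B i j)
    (hbal : MatBalanced Bt) :
    (Bt.map (Int.cast : ℤ → ℚ)).rank = (B.map (Int.cast : ℤ → ℚ)).rank := by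
  have hunit (i j) (hij : Bt i j ≠ 0) : IsUnit (Bt i j) := by
    have hB1 : B i j = 1 := (hB i j).resolve_left fun h0 => hij (abs_eq_zero.mp (h0 ▸ habs i j))
    exact Int.isUnit_iff_abs_eq.mpr (hB1 ▸ habs i j)
  have hB_eq : B = Bt.map abs := by
    ext i j
    exact (habs i j).symm
  obtain ⟨d₁, d₂, h₁, h₂, hBt⟩ := hbal.exists_eq_diagonal_mul_abs_mul_diagonal hunit
  let φ := Int.castRingHom ℚ
  change (Bt.map φ).rank = (B.map φ).rank
  conv_lhs => rw [hBt]
  rw [Matrix.map_mul, Matrix.map_mul, Matrix.diagonal_map (map_zero φ),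
    Matrix.diagonal_map (map_zero φ), hB_eq,
    Matrix.rank_diagonal_mul_mul_diagonal (fun i => (h₁ i).map φ) (fun j => (h₂ j).map φ)]

/-- **All balanced signings of a `{0,1}`-matrix have the same rank.** If `B` is a
`{0,1}`-matrix, `B̃` a signing of it (`|B̃ i j| = B i j` for all `i, j`, so `B̃` takes values
in `{−1,0,+1}`) whose associated signed bipartite graph is balanced, then
`rank_ℚ(B̃) = rank_ℚ(B)`. -/
theorem balanced_signing_rank (m n : ℕ) (hm : 1 ≤ m) (hn : 1 ≤ n)
    (B : Matrix (Fin m) (Fin n) ℤ) (hB : ∀ i j, B i j = 0 ∨ B i j = 1)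
    (Bt : Matrix (Fin m) (Fin n) ℤ) (habs : ∀ i j, |Bt i j| = B i j)
    (hbal : MatBalanced Bt) :
    (Bt.map (Int.cast : ℤ → ℚ)).rank = (B.map (Int.cast : ℤ → ℚ)).rank :=
  balanced_signing_rank_general m n B hB Bt habs hbal
end
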